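/- Budget condition for risk-dominance of compliance over free-riding: assume α = 0 and arbitrary real T, R, P, S and ε. Under both the reward matrix Π_R and the punishment matrix Π_P, the strategy ACD is risk-dominant against ADD if and only if u > (T + P − R − S)/2, and this condition does not depend on ε. In particular, in the donation game (T = b, R = b − c, P = 0, S = −c with b > c > 0) the condition reads u > c, i.e. the per-capita incentive budget must exceed the cost of cooperation. -/

import Mathlib

/-!
Between ACD and ADD a commitment is always formed, so every entry of the 2×2 game carries the
same participation cost `ε/2` and participation reward `α·u`, which cancel in the risk-dominance
comparison. What remains is the compliance reward (resp. the defection fine) `(1-α)·u`, collected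
in both ACD rows (resp. paid in both ADD rows), against the gap `T + P - R - S` of the
underlying Prisoner's Dilemma.
-/

/-- A strategy in the commitment game: whether to accept a prior commitment
(`commit = true` means "A"), the action if a commitment is formed
(`inAct = true` means "C"), and the action if no commitment is formed
(`outAct = true` means "C"). -/
structure Strat where
  commit : Bool
  inAct : Bool
  outAct : Bool
deriving DecidableEq

def ACC : Strat := ⟨true, true, true⟩
def ACD : Strat := ⟨true, true, false⟩
def ADC : Strat := ⟨true, false, true⟩
def ADD : Strat := ⟨true, false, false⟩
def NCC : Strat := ⟨false, true, true⟩
def NCD : Strat := ⟨false, true, false⟩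
def NDC : Strat := ⟨false, false, true⟩
def NDD : Strat := ⟨false, false, false⟩

/-- Row player's payoff in the one-shot Prisoner's Dilemma with payoffs
`T, R, P, S`; `true` codes cooperation. -/
def pd (T R P S : ℝ) (myC otherC : Bool) : ℝ :=
  if myC then (if otherC then R else S) else (if otherC then T else P)

/-- The reward payoff matrix `Π_R`: the row player receives its PD payoff
(commitment formed iff both commit; then each pays `ε/2` and plays its
in-commitment action, otherwise both play their no-commitment actions),
plus `α·u` if it accepted the commitment, plus an additional `(1−α)·u`
if a commitment is formed and it cooperates in it. -/
noncomputable def payR (T R P S ε u α : ℝ) (s t : Strat) : ℝ :=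
  (if s.commit ∧ t.commit then
      pd T R P S s.inAct t.inAct - ε / 2 + (if s.inAct then (1 - α) * u else 0)
   else pd T R P S s.outAct t.outAct)
  + (if s.commit then α * u else 0)

/-- The punishment payoff matrix `Π_P`: as `Π_R` except that instead of the
reward `(1−α)·u` for compliance, the amount `(1−α)·u` is subtracted when a
commitment is formed and the row player defects in it. -/
noncomputable def payP (T R P S ε u α : ℝ) (s t : Strat) : ℝ :=
  (if s.commit ∧ t.commit then
      pd T R P S s.inAct t.inAct - ε / 2 - (if s.inAct then 0 else (1 - α) * u)
   else pd T R P S s.outAct t.outAct)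
  + (if s.commit then α * u else 0)

/-- Flip the participation decision of a strategy (A ↔ N). -/
def flipPart (s : Strat) : Strat := ⟨!s.commit, s.inAct, s.outAct⟩

/-- The noisy payoff matrix `Π̃`: with probability `χ` each player independently
errs in its decision whether to join the commitment. -/
noncomputable def noisy (χ : ℝ) (M : Strat → Strat → ℝ) (s t : Strat) : ℝ :=
  (1 - χ) ^ 2 * M s t + χ * (1 - χ) * (M (flipPart s) t + M s (flipPart t))
    + χ ^ 2 * M (flipPart s) (flipPart t)

/-- Strategy `a` is risk-dominant against strategy `b` under payoff matrix `Π`. -/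
def RiskDom (M : Strat → Strat → ℝ) (a b : Strat) : Prop :=
  M a a + M a b > M b a + M b b

/-- `x` is an evolutionarily stable strategy (ESS) of the payoff matrix `Π`. -/
def IsESS (M : Strat → Strat → ℝ) (x : Strat) : Prop :=
  ∀ y : Strat, y ≠ x → M x x > M y x ∨ (M x x = M y x ∧ M x y > M y y)

theorem riskDom_payR_ACD_ADD_iff (T R P S ε u α : ℝ) :
    RiskDom (payR T R P S ε u α) ACD ADD ↔ (T + P - R - S) / 2 < (1 - α) * u := by
  simp only [RiskDom, payR, pd, ACD, ADD, and_self, if_true, Bool.false_eq_true, if_false]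
  constructor <;> intro h <;> linarith

theorem riskDom_payP_ACD_ADD_iff (T R P S ε u α : ℝ) :
    RiskDom (payP T R P S ε u α) ACD ADD ↔ (T + P - R - S) / 2 < (1 - α) * u := by
  simp only [RiskDom, payP, pd, ACD, ADD, and_self, if_true, Bool.false_eq_true, if_false]
  constructor <;> intro h <;> linarith

/-- **Budget condition for risk-dominance of compliance (ACD) over free-riding
(ADD).**
With `α = 0` and arbitrary `T, R, P, S, ε`, under both the reward matrix `Π_R` and
the punishment matrix `Π_P`, ACD is risk-dominant against ADD iff
`u > (T + P − R − S)/2` (independently of `ε`). In particular, in the donation game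
(`T = b`, `R = b − c`, `P = 0`, `S = −c` with `b > c > 0`) the condition reads
`u > c`. -/
theorem budget_condition_ACD_vs_ADD (T R P S ε u : ℝ) :
    (RiskDom (payR T R P S ε u 0) ACD ADD ↔ u > (T + P - R - S) / 2) ∧
    (RiskDom (payP T R P S ε u 0) ACD ADD ↔ u > (T + P - R - S) / 2) ∧
    (∀ b c : ℝ, b > c → c > 0 →
      (RiskDom (payR b (b - c) 0 (-c) ε u 0) ACD ADD ↔ u > c) ∧
      (RiskDom (payP b (b - c) 0 (-c) ε u 0) ACD ADD ↔ u > c)) := by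
  have reward (T R P S : ℝ) :
      RiskDom (payR T R P S ε u 0) ACD ADD ↔ u > (T + P - R - S) / 2 := by
    simpa using riskDom_payR_ACD_ADD_iff T R P S ε u 0
  have punish (T R P S : ℝ) :
      RiskDom (payP T R P S ε u 0) ACD ADD ↔ u > (T + P - R - S) / 2 := by
    simpa using riskDom_payP_ACD_ADD_iff T R P S ε u 0
  have donation_gap (b c : ℝ) : (b + 0 - (b - c) - -c) / 2 = c := by ring
  refine ⟨reward T R P S, punish T R P S, fun b c _ _ => ⟨?_, ?_⟩⟩
  · rw [reward, donation_gap]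
  · rw [punish, donation_gap]
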